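/- arXiv:1404.0787 — 3 statements merged into one kernel-verified Lean document; each statement's English description precedes it below -/
import Mathlib

section
/- Let ε ≥ 0, let x̄ ∈ X and suppose P(x̄) := {w : f(w)+φ(w−x̄) = (f⊕φ)(x̄)} is nonempty. Then the ε-Fréchet subdifferential satisfies ∂̂_ε(f⊕φ)(x̄) ⊂ ⋂_{w ∈ P(x̄)} ( ∂̂_ε f(w) ∩ [−∂̂_ε φ(w−x̄)] ). -/
open Filter Topology Set Bornology

variable {X : Type*} [NormedAddCommGroup X] [NormedSpace ℝ X]

/-- Infimal convolution of an extended-real-valued `f` with a real-valued `φ`. -/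
noncomputable def infConv (f : X → EReal) (φ : X → ℝ) (x : X) : EReal :=
  ⨅ w, f w + ((φ (w - x) : ℝ) : EReal)

/-- ε-Fréchet subdifferential of a real-valued function. -/
def frechetSubdiff (g : X → ℝ) (ε : ℝ) (x0 : X) : Set (X →L[ℝ] ℝ) :=
  {p | ∀ η : ℝ, 0 < η → ∀ᶠ x in 𝓝 x0, p (x - x0) ≤ g x - g x0 + (ε + η) * ‖x - x0‖}

/-- ε-Fréchet subdifferential of an extended-real-valued function. -/
def frechetSubdiffE (f : X → EReal) (ε : ℝ) (x0 : X) : Set (X →L[ℝ] ℝ) :=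
  {p | ∀ η : ℝ, 0 < η → ∀ᶠ x in 𝓝 x0,
    ((p (x - x0) : ℝ) : EReal) ≤ f x - f x0 + (((ε + η) * ‖x - x0‖ : ℝ) : EReal)}

/-- Limiting (Mordukhovich) subdifferential of a real-valued function. -/
def limitingSubdiff (g : X → ℝ) (x0 : X) : Set (X →L[ℝ] ℝ) :=
  {p | ∃ (x : ℕ → X) (ε : ℕ → ℝ) (q : ℕ → X →L[ℝ] ℝ),
    (∀ k, 0 ≤ ε k) ∧ Tendsto ε atTop (𝓝 0) ∧
    Tendsto x atTop (𝓝 x0) ∧ Tendsto (fun k => g (x k)) atTop (𝓝 (g x0)) ∧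
    (∀ k, q k ∈ frechetSubdiff g (ε k) (x k)) ∧
    (∀ v : X, Tendsto (fun k => (q k) v) atTop (𝓝 (p v)))}

/-- Limiting (Mordukhovich) subdifferential of an extended-real-valued function. -/
def limitingSubdiffE (f : X → EReal) (x0 : X) : Set (X →L[ℝ] ℝ) :=
  {p | ∃ (x : ℕ → X) (ε : ℕ → ℝ) (q : ℕ → X →L[ℝ] ℝ),
    (∀ k, 0 ≤ ε k) ∧ Tendsto ε atTop (𝓝 0) ∧
    Tendsto x atTop (𝓝 x0) ∧ Tendsto (fun k => f (x k)) atTop (𝓝 (f x0)) ∧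
    (∀ k, q k ∈ frechetSubdiffE f (ε k) (x k)) ∧
    (∀ v : X, Tendsto (fun k => (q k) v) atTop (𝓝 (p v)))}

/-- Fréchet strict differentiability of an extended-real-valued function. -/
def FrechetStrictDiffAtE (f : X → EReal) (x0 : X) : Prop :=
  ∃ v : X →L[ℝ] ℝ, ∀ ε : ℝ, 0 < ε → ∃ δ > (0 : ℝ), ∀ x y : X,
    ‖x - x0‖ < δ → ‖y - x0‖ < δ →
      f x - f y - ((v (x - y) : ℝ) : EReal) ≤ ((ε * ‖x - y‖ : ℝ) : EReal) ∧
      ((-(ε * ‖x - y‖) : ℝ) : EReal) ≤ f x - f y - ((v (x - y) : ℝ) : EReal)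

/-- Local Lipschitz continuity of an extended-real-valued function around a point. -/
def LocallyLipschitzAtE (f : X → EReal) (x0 : X) : Prop :=
  ∃ ℓ : ℝ, 0 ≤ ℓ ∧ ∃ δ > (0 : ℝ), ∀ x y : X, ‖x - x0‖ < δ → ‖y - x0‖ < δ →
    f x - f y ≤ ((ℓ * ‖x - y‖ : ℝ) : EReal)

/-!
If `w` attains the infimum defining `g = f ⊕ φ` at `x0`, then `x ↦ g (x + (x0 - w)) - φ (w - x0)`
lies below `f` and agrees with it at `w`, while `u ↦ g (w - u) - f w` lies below `φ` and agrees
with it at `w - x0`. A function touching another from below hands its ε-Fréchet subgradients on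
to it, and these two minorants are `g` composed with a translation and with a reflection, which
carry `p ∈ ∂̂_ε g (x0)` to `p` at `w` and to `-p` at `w - x0`.
-/

omit [NormedSpace ℝ X] in
theorem infConv_le (f : X → EReal) (φ : X → ℝ) (x w : X) :
    infConv f φ x ≤ f w + ((φ (w - x) : ℝ) : EReal) :=
  iInf_le (fun v => f v + ((φ (v - x) : ℝ) : EReal)) w

theorem EReal.exists_eq_coe_of_add_coe_eq_coe {a : EReal} {b c : ℝ} (h : a + b = c) :
    ∃ r : ℝ, a = r := by
  induction a using EReal.rec with
  | bot => simp at h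
  | top => simp at h
  | coe r => exact ⟨r, rfl⟩

section FrechetSubdiff

variable {ε : ℝ} {p : X →L[ℝ] ℝ}

theorem mem_frechetSubdiff_comp_add_const {g : X → ℝ} {x1 a : X}
    (hp : p ∈ frechetSubdiff g ε (x1 + a)) : p ∈ frechetSubdiff (fun x => g (x + a)) ε x1 := by
  intro η hη
  have hcont : Tendsto (fun x => x + a) (𝓝 x1) (𝓝 (x1 + a)) :=
    (continuous_id.add continuous_const).tendsto x1
  filter_upwards [hcont.eventually (hp η hη)] with x hx
  simpa only [add_sub_add_right_eq_sub] using hx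

theorem neg_mem_frechetSubdiff_comp_const_sub {g : X → ℝ} {a u0 : X}
    (hp : p ∈ frechetSubdiff g ε (a - u0)) :
    -p ∈ frechetSubdiff (fun u => g (a - u)) ε u0 := by
  intro η hη
  have hcont : Tendsto (fun u => a - u) (𝓝 u0) (𝓝 (a - u0)) :=
    (continuous_const.sub continuous_id).tendsto u0
  filter_upwards [hcont.eventually (hp η hη)] with u hu
  rwa [sub_sub_sub_cancel_left, ← neg_sub, map_neg, norm_neg] at hu

theorem mem_frechetSubdiff_of_le_add {f h : X → ℝ} {c : ℝ} {x0 : X}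
    (hle : ∀ᶠ x in 𝓝 x0, h x ≤ f x + c) (heq : h x0 = f x0 + c)
    (hp : p ∈ frechetSubdiff h ε x0) : p ∈ frechetSubdiff f ε x0 := by
  intro η hη
  filter_upwards [hle, hp η hη] with x hxle hx
  linarith

theorem mem_frechetSubdiffE_of_le_add {f : X → EReal} {h : X → ℝ} {c : ℝ} {x0 : X}
    (hle : ∀ᶠ x in 𝓝 x0, (h x : EReal) ≤ f x + c) (heq : (h x0 : EReal) = f x0 + c)
    (hp : p ∈ frechetSubdiff h ε x0) : p ∈ frechetSubdiffE f ε x0 := by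
  obtain ⟨r, hr⟩ := EReal.exists_eq_coe_of_add_coe_eq_coe heq.symm
  rw [hr] at heq
  have heq' : h x0 = r + c := by exact_mod_cast heq
  intro η hη
  filter_upwards [hle, hp η hη] with x hxle hx
  rw [hr]
  induction hfx : f x using EReal.rec with
  | bot => simp [hfx] at hxle
  | top =>
    rw [EReal.top_sub_coe, EReal.top_add_coe]
    exact le_top
  | coe s =>
    rw [hfx] at hxle
    have hxle' : h x ≤ s + c := by exact_mod_cast hxle
    exact_mod_cast (by linarith : p (x - x0) ≤ s - r + (ε + η) * ‖x - x0‖)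

end FrechetSubdiff

theorem stmt_7_general (f : X → EReal) (φ : X → ℝ) (g : X → ℝ)
    (hg : ∀ x, (g x : EReal) = infConv f φ x)
    (ε : ℝ) (x0 : X) :
    ∀ p ∈ frechetSubdiff g ε x0, ∀ w : X,
      f w + ((φ (w - x0) : ℝ) : EReal) = (g x0 : EReal) →
      p ∈ frechetSubdiffE f ε w ∧ -p ∈ frechetSubdiff φ ε (w - x0) := by
  intro p hp w hw
  have hle (x v : X) : (g x : EReal) ≤ f v + ((φ (v - x) : ℝ) : EReal) :=
    (hg x).trans_le (infConv_le f φ x v)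
  obtain ⟨r, hr⟩ := EReal.exists_eq_coe_of_add_coe_eq_coe hw
  constructor
  · refine mem_frechetSubdiffE_of_le_add (h := fun x => g (x + (x0 - w)))
      (.of_forall fun x => ?_) (by simpa using hw.symm)
      (mem_frechetSubdiff_comp_add_const (by simpa using hp))
    simpa [sub_add_eq_sub_sub] using hle (x + (x0 - w)) x
  · refine mem_frechetSubdiff_of_le_add (h := fun u => g (w - u)) (c := r)
      (.of_forall fun u => ?_) ?_
      (neg_mem_frechetSubdiff_comp_const_sub (by simpa using hp))
    · have := hle (w - u) w
      rw [hr, sub_sub_cancel] at this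
      exact_mod_cast this.trans_eq (add_comm _ _)
    · rw [hr] at hw
      simp only [sub_sub_cancel]
      exact_mod_cast (hw.symm.trans (add_comm _ _))

/-- upper estimate of the ε-Fréchet subdifferential via projections. -/
theorem stmt_7 [CompleteSpace X] (f : X → EReal) (φ : X → ℝ) (g : X → ℝ)
    (hfbot : ∀ x, f x ≠ ⊥) (hφpos : ∀ x, 0 ≤ φ x)
    (hg : ∀ x, (g x : EReal) = infConv f φ x)
    (ε : ℝ) (hε : 0 ≤ ε) (x0 : X)
    (hPne : ∃ w : X, f w + ((φ (w - x0) : ℝ) : EReal) = (g x0 : EReal)) :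
    ∀ p ∈ frechetSubdiff g ε x0, ∀ w : X,
      f w + ((φ (w - x0) : ℝ) : EReal) = (g x0 : EReal) →
      p ∈ frechetSubdiffE f ε w ∧ -p ∈ frechetSubdiff φ ε (w - x0) :=
  stmt_7_general f φ g hg ε x0
end

section
/- Suppose φ is subadditive and positively homogeneous. Let x̄ ∈ X and w̄ ∈ P(x̄) := {w : f(w)+φ(w−x̄) = (f⊕φ)(x̄)}. Then for every t ∈ (0,1], the point w̄ belongs to P(t w̄ + (1−t) x̄), and moreover (f⊕φ)(t w̄ + (1−t) x̄) = (1−t)(f⊕φ)(x̄) + t f(w̄). -/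
/-!
If `w` attains `(f ⊕ φ)(x)` and `y` lies on the segment `[x, w]`, positive homogeneity splits
`φ (w - x) = φ (w - y) + φ (y - x)`, while subadditivity gives
`(f ⊕ φ)(x) ≤ (f ⊕ φ)(y) + φ (y - x)`. Cancelling `φ (y - x)` shows that `w` also attains
`(f ⊕ φ)(y)`, and the value formula is then linear arithmetic in `t`.
-/

open Filter Topology Set Bornology

variable {X : Type*} [NormedAddCommGroup X] [NormedSpace ℝ X]

section InfConv

omit [NormedSpace ℝ X]

variable {f : X → EReal} {φ : X → ℝ}

theorem infConv_le_add (x w : X) : infConv f φ x ≤ f w + φ (w - x) :=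
  iInf_le (fun w => f w + ((φ (w - x) : ℝ) : EReal)) w

theorem infConv_le_infConv_add (hsub : ∀ x y : X, φ (x + y) ≤ φ x + φ y) (x y : X) :
    infConv f φ x ≤ infConv f φ y + φ (y - x) := by
  rw [← EReal.sub_le_iff_le_add (.inl (EReal.coe_ne_bot _)) (.inl (EReal.coe_ne_top _))]
  refine le_iInf fun w => ?_
  rw [EReal.sub_le_iff_le_add (.inl (EReal.coe_ne_bot _)) (.inl (EReal.coe_ne_top _))]
  calc infConv f φ x ≤ f w + φ (w - x) := infConv_le_add x w
    _ ≤ f w + ((φ (w - y) + φ (y - x) : ℝ) : EReal) := by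
      gcongr
      simpa only [sub_add_sub_cancel] using hsub (w - y) (y - x)
    _ = f w + φ (w - y) + φ (y - x) := by rw [EReal.coe_add, add_assoc]

theorem add_eq_infConv_of_split (hsub : ∀ x y : X, φ (x + y) ≤ φ x + φ y) {x y w : X}
    (hw : f w + φ (w - x) = infConv f φ x) (hsplit : φ (w - x) = φ (w - y) + φ (y - x)) :
    f w + φ (w - y) = infConv f φ y := by
  refine le_antisymm ?_ (infConv_le_add y w)
  rw [← (EReal.addLECancellable_coe (φ (y - x))).add_le_add_iff_right, add_assoc,
    ← EReal.coe_add, ← hsplit, hw]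
  exact infConv_le_infConv_add hsub x y

end InfConv

section PosHomogeneous

variable {φ : X → ℝ}

theorem map_zero_of_posHomogeneous (hpos : ∀ t : ℝ, 0 < t → ∀ x : X, φ (t • x) = t * φ x) :
    φ 0 = 0 := by
  have h := hpos 2 two_pos 0
  rw [smul_zero] at h
  linarith

theorem map_smul_of_nonneg_of_posHomogeneous
    (hpos : ∀ t : ℝ, 0 < t → ∀ x : X, φ (t • x) = t * φ x) {s : ℝ} (hs : 0 ≤ s) (x : X) :
    φ (s • x) = s * φ x := by
  rcases hs.eq_or_lt with rfl | hs
  · rw [zero_smul, zero_mul, map_zero_of_posHomogeneous hpos]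
  · exact hpos s hs x

theorem map_sub_segment_left (hpos : ∀ t : ℝ, 0 < t → ∀ x : X, φ (t • x) = t * φ x)
    {t : ℝ} (ht₁ : t ≤ 1) (x w : X) :
    φ (w - (t • w + (1 - t) • x)) = (1 - t) * φ (w - x) := by
  rw [← map_smul_of_nonneg_of_posHomogeneous hpos (sub_nonneg.2 ht₁)]
  congr 1
  module

theorem map_sub_segment_right (hpos : ∀ t : ℝ, 0 < t → ∀ x : X, φ (t • x) = t * φ x)
    {t : ℝ} (ht₀ : 0 ≤ t) (x w : X) :
    φ (t • w + (1 - t) • x - x) = t * φ (w - x) := by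
  rw [← map_smul_of_nonneg_of_posHomogeneous hpos ht₀]
  congr 1
  module

theorem map_sub_eq_add_of_segment (hpos : ∀ t : ℝ, 0 < t → ∀ x : X, φ (t • x) = t * φ x)
    {t : ℝ} (ht₀ : 0 ≤ t) (ht₁ : t ≤ 1) (x w : X) :
    φ (w - x) = φ (w - (t • w + (1 - t) • x)) + φ (t • w + (1 - t) • x - x) := by
  rw [map_sub_segment_left hpos ht₁, map_sub_segment_right hpos ht₀]
  ring

end PosHomogeneous

theorem EReal.eq_coe_sub_of_add_coe_eq_coe {a : EReal} {b c : ℝ} (h : a + b = c) :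
    a = ((c - b : ℝ) : EReal) := by
  induction a with
  | bot => simp at h
  | coe a => exact_mod_cast eq_sub_of_add_eq (by exact_mod_cast h)
  | top => simp at h

theorem stmt_8_general (f : X → EReal) (φ : X → ℝ) (g : X → ℝ)
    (hsub : ∀ x y : X, φ (x + y) ≤ φ x + φ y)
    (hpos : ∀ t : ℝ, 0 < t → ∀ x : X, φ (t • x) = t * φ x)
    (hg : ∀ x, (g x : EReal) = infConv f φ x)
    (x0 w0 : X) (hw0 : f w0 + ((φ (w0 - x0) : ℝ) : EReal) = (g x0 : EReal)) :
    ∀ t : ℝ, 0 < t → t ≤ 1 →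
      f w0 + ((φ (w0 - (t • w0 + (1 - t) • x0)) : ℝ) : EReal)
          = (g (t • w0 + (1 - t) • x0) : EReal) ∧
      g (t • w0 + (1 - t) • x0) = (1 - t) * g x0 + t * (f w0).toReal := by
  intro t ht ht1
  have hsplit := map_sub_eq_add_of_segment hpos ht.le ht1 x0 w0
  have hproj : f w0 + φ (w0 - (t • w0 + (1 - t) • x0)) = g (t • w0 + (1 - t) • x0) := by
    rw [hg]
    exact add_eq_infConv_of_split hsub (hw0.trans (hg x0)) hsplit
  refine ⟨hproj, ?_⟩
  have hfw0 := EReal.eq_coe_sub_of_add_coe_eq_coe hw0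
  rw [hfw0, ← EReal.coe_add, EReal.coe_eq_coe_iff, map_sub_segment_left hpos ht1] at hproj
  rw [← hproj, hfw0, EReal.toReal_coe]
  ring

/-- projections along the segment for subadditive positively homogeneous `φ`. -/
theorem stmt_8 [CompleteSpace X] (f : X → EReal) (φ : X → ℝ) (g : X → ℝ)
    (hfbot : ∀ x, f x ≠ ⊥) (hφpos : ∀ x, 0 ≤ φ x)
    (hsub : ∀ x y : X, φ (x + y) ≤ φ x + φ y)
    (hpos : ∀ t : ℝ, 0 < t → ∀ x : X, φ (t • x) = t * φ x)
    (hg : ∀ x, (g x : EReal) = infConv f φ x)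
    (x0 w0 : X) (hw0 : f w0 + ((φ (w0 - x0) : ℝ) : EReal) = (g x0 : EReal)) :
    ∀ t : ℝ, 0 < t → t ≤ 1 →
      f w0 + ((φ (w0 - (t • w0 + (1 - t) • x0)) : ℝ) : EReal)
          = (g (t • w0 + (1 - t) • x0) : EReal) ∧
      g (t • w0 + (1 - t) • x0) = (1 - t) * g x0 + t * (f w0).toReal :=
  stmt_8_general f φ g hsub hpos hg x0 w0 hw0
end

section
/- Suppose f: X → (-∞,∞] is lower semicontinuous. Let ε > 0, η > 0, x̄ ∈ X, and x* ∈ ∂̂_ε(f⊕φ)(x̄). Then there exist w̃, w̄ ∈ dom f such that ‖w̄−w̃‖ ≤ η and x* ∈ ∂̂_{ε+η} f(w̄). If moreover φ is subadditive, then additionally f(w̃) + φ(w̄−x̄) ≤ (f⊕φ)(x̄) + φ(w̄−w̃) + η. -/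
open Filter Topology Set Bornology

variable {X : Type*} [NormedAddCommGroup X] [NormedSpace ℝ X]

/-!
Choose `wt` with `f wt + φ (wt - x0)` within `η r / 2` of `(f ⊕ φ) x0`, for a small radius `r`.
Translating the subgradient inequality of `f ⊕ φ` at `x0` by `wt - x0` shows that
`f - p + (ε + η / 2) ‖· - wt‖` is bounded below on the closed ball of radius `r` around `wt` by a
constant that it nearly attains at `wt`. Ekeland's variational principle with slope `η / 2` gives
a point `w0` of that ball minimising this function plus `(η / 2) ‖· - w0‖` on the ball, and such
a local minimality makes `p` an `(ε + η)`-Fréchet subgradient of `f` at `w0`. The final estimate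
is subadditivity: `φ (w0 - x0) ≤ φ (w0 - wt) + φ (wt - x0)`.
-/

open Metric

section Ekeland

variable {M : Type*} [MetricSpace M]

def ekelandSet (F : M → ℝ) (t : ℝ) (a : M) : Set M := {x | F x + t * dist x a ≤ F a}

variable {F : M → ℝ} {t : ℝ}

theorem mem_ekelandSet_self (a : M) : a ∈ ekelandSet F t a := by
  simp [ekelandSet]

theorem ekelandSet_subset_of_mem (ht : 0 ≤ t) {a b : M} (hb : b ∈ ekelandSet F t a) :
    ekelandSet F t b ⊆ ekelandSet F t a := fun x hx => by
  simp only [ekelandSet, mem_ofPred_eq] at hb hx ⊢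
  nlinarith [dist_triangle x b a]

theorem isClosed_ekelandSet (hF : LowerSemicontinuous F) (a : M) :
    IsClosed (ekelandSet F t a) :=
  (hF.add (continuous_const.mul (continuous_id.dist continuous_const)).lowerSemicontinuous
    |>.isClosed_preimage (F a))

theorem exists_ekelandSet_subset_closedBall (hF : BddBelow (range F)) (ht : 0 < t) {r : ℝ}
    (hr : 0 < r) (a : M) : ∃ b ∈ ekelandSet F t a, ekelandSet F t b ⊆ closedBall b r := by
  have hbdd : BddBelow (F '' ekelandSet F t a) := hF.mono (image_subset_range _ _)
  obtain ⟨_, ⟨b, hb, rfl⟩, hFb⟩ := exists_lt_of_csInf_lt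
    ((nonempty_of_mem (mem_ekelandSet_self a)).image F) (lt_add_of_pos_right _ (mul_pos ht hr))
  refine ⟨b, hb, fun y hy => ?_⟩
  have hinf : sInf (F '' ekelandSet F t a) ≤ F y :=
    csInf_le hbdd (mem_image_of_mem F (ekelandSet_subset_of_mem ht.le hb hy))
  simp only [ekelandSet, mem_ofPred_eq] at hy
  rw [mem_closedBall]
  nlinarith

theorem exists_seq_ekelandSet (hF : BddBelow (range F)) (ht : 0 < t) (x0 : M) :
    ∃ x : ℕ → M, x 0 = x0 ∧ ∀ n, x (n + 1) ∈ ekelandSet F t (x n) ∧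
      ekelandSet F t (x (n + 1)) ⊆ closedBall (x (n + 1)) (1 / (n + 1)) := by
  choose next hnext using fun (n : ℕ) => exists_ekelandSet_subset_closedBall hF ht
    (Nat.one_div_pos_of_nat (n := n))
  exact ⟨fun n => Nat.rec x0 (fun k a => next k a) n, rfl, fun n => hnext n _⟩

theorem LowerSemicontinuous.exists_ekeland_point [CompleteSpace M] (hF : LowerSemicontinuous F)
    (hbdd : BddBelow (range F)) (ht : 0 < t) (x0 : M) :
    ∃ z, F z + t * dist z x0 ≤ F x0 ∧ ∀ x, F z ≤ F x + t * dist x z := by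
  obtain ⟨x, rfl, hx⟩ := exists_seq_ekelandSet hbdd ht x0
  set s : ℕ → Set M := fun n => ekelandSet F t (x (n + 1))
  have hanti : Antitone s :=
    antitone_nat_of_succ_le fun n => ekelandSet_subset_of_mem ht.le (hx (n + 1)).1
  have hbounded : ∀ n, IsBounded (s n) := fun n => isBounded_closedBall.subset (hx n).2
  have hdiam : Tendsto (fun n => diam (s n)) atTop (𝓝 0) := by
    have hlim : Tendsto (fun n : ℕ => 2 * (1 / ((n : ℝ) + 1))) atTop (𝓝 0) := by
      simpa using (tendsto_one_div_add_atTop_nhds_zero_nat (𝕜 := ℝ)).const_mul 2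
    refine squeeze_zero (fun n => diam_nonneg) (fun n => ?_) hlim
    exact (diam_mono (hx n).2 isBounded_closedBall).trans (diam_closedBall (by positivity))
  obtain ⟨z, hz⟩ := nonempty_iInter_of_nonempty_biInter
    (fun n => isClosed_ekelandSet hF _) hbounded
    (fun N => ⟨x (N + 1), mem_iInter₂.2 fun n hn => hanti hn (mem_ekelandSet_self _)⟩) hdiam
  rw [mem_iInter] at hz
  refine ⟨z, ekelandSet_subset_of_mem ht.le (hx 0).1 (hz 0), fun y => ?_⟩
  by_contra! hy
  have hyz : ∀ n, dist y z ≤ diam (s n) := fun n => dist_le_diam_of_mem (hbounded n)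
    (ekelandSet_subset_of_mem ht.le (hz n) hy.le) (hz n)
  have : dist y z = 0 := le_antisymm (ge_of_tendsto' hdiam hyz) dist_nonneg
  rw [dist_eq_zero.1 this, dist_self, mul_zero, add_zero] at hy
  exact lt_irrefl _ hy

theorem IsClosed.exists_ekeland_point_ereal [CompleteSpace M] {s : Set M} (hs : IsClosed s)
    {F : M → EReal} (hF : LowerSemicontinuous F) {m : ℝ} (hm : ∀ x ∈ s, (m : EReal) ≤ F x)
    (ht : 0 < t) {x0 : M} (hx0s : x0 ∈ s) (hx0 : F x0 ≠ ⊤) :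
    ∃ z ∈ s, F z + ((t * dist z x0 : ℝ) : EReal) ≤ F x0 ∧
      ∀ x ∈ s, F z ≤ F x + ((t * dist x z : ℝ) : EReal) := by
  have : CompleteSpace s := hs.completeSpace_coe
  set c : ℝ := (F x0).toReal
  have hc : F x0 = c := (EReal.coe_toReal hx0 (ne_bot_of_le_ne_bot (EReal.coe_ne_bot m)
    (hm x0 hx0s))).symm
  have hmc : m ≤ c := EReal.coe_le_coe_iff.1 (hc ▸ hm x0 hx0s)
  set G : s → ℝ := fun x => (min (F x) c).toReal
  have hG : ∀ x : s, (G x : EReal) = min (F x) c := fun x => EReal.coe_toReal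
    (ne_top_of_le_ne_top (EReal.coe_ne_top c) (min_le_right _ _))
    (ne_bot_of_le_ne_bot (EReal.coe_ne_bot m) (le_min (hm x x.2) (EReal.coe_le_coe_iff.2 hmc)))
  have hGlsc : LowerSemicontinuous G := by
    intro x y hy
    rw [gt_iff_lt, ← EReal.coe_lt_coe_iff, hG] at hy
    filter_upwards [((hF.comp continuous_subtype_val).inf lowerSemicontinuous_const) x y hy]
      with x' hx'
    rw [gt_iff_lt, ← EReal.coe_lt_coe_iff, hG]
    exact hx'
  have hGm : BddBelow (range G) := ⟨m, by
    rintro _ ⟨x, rfl⟩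
    rw [← EReal.coe_le_coe_iff, hG]
    exact le_min (hm x x.2) (EReal.coe_le_coe_iff.2 hmc)⟩
  obtain ⟨z, hz0, hz⟩ := hGlsc.exists_ekeland_point hGm ht ⟨x0, hx0s⟩
  have hGx0 : G ⟨x0, hx0s⟩ = c := by
    rw [← EReal.coe_eq_coe_iff, hG, ← hc, min_self]
  have hFz : F z ≤ c := by
    by_contra! hcz
    have hGz : G z = c := by rw [← EReal.coe_eq_coe_iff, hG, min_eq_right hcz.le]
    have : dist z ⟨x0, hx0s⟩ = 0 := by
      rw [hGz, hGx0] at hz0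
      exact le_antisymm (nonpos_of_mul_nonpos_right (by linarith) ht) dist_nonneg
    rw [dist_eq_zero.1 this, ← hc] at hcz
    exact lt_irrefl _ hcz
  have hGz : (G z : EReal) = F z := by rw [hG, min_eq_left hFz]
  refine ⟨z, z.2, ?_, fun x hx => ?_⟩
  · rw [← hGz, hc, ← EReal.coe_add, EReal.coe_le_coe_iff, ← hGx0]
    exact hz0
  · calc F z = G z := hGz.symm
      _ ≤ ((G ⟨x, hx⟩ + t * dist x z : ℝ) : EReal) := EReal.coe_le_coe_iff.2 (hz ⟨x, hx⟩)
      _ ≤ F x + ((t * dist x z : ℝ) : EReal) := by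
        rw [EReal.coe_add, hG]
        exact add_le_add_left (min_le_left _ _) _

end Ekeland

section Subdifferential

variable {f : X → EReal} {p : X →L[ℝ] ℝ}

theorem mem_frechetSubdiffE_of_isLocalMin_add {ψ : X → ℝ} {ε : ℝ} {w0 : X}
    (hmin : IsLocalMin (fun x => f x + ((ψ x : ℝ) : EReal)) w0) (htop : f w0 ≠ ⊤)
    (hbot : f w0 ≠ ⊥) (hψ : ∀ x, ψ x ≤ ψ w0 - p (x - w0) + ε * ‖x - w0‖) :
    p ∈ frechetSubdiffE f ε w0 := by
  intro η hη
  filter_upwards [hmin] with x hx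
  lift f w0 to ℝ using ⟨htop, hbot⟩ with a ha
  induction hfx : f x using EReal.rec with
  | bot => rw [hfx] at hx; simp at hx
  | top => rw [EReal.top_sub_coe, EReal.top_add_coe]; exact le_top
  | coe b =>
    rw [hfx] at hx
    rw [← EReal.coe_sub, ← EReal.coe_add, EReal.coe_le_coe_iff]
    rw [← EReal.coe_add, ← EReal.coe_add, EReal.coe_le_coe_iff] at hx
    nlinarith [hψ x, norm_nonneg (x - w0)]

theorem exists_mem_frechetSubdiffE_of_lt_add [CompleteSpace X] (hf : LowerSemicontinuous f)
    {c t r m : ℝ} (hc : 0 ≤ c) (ht : 0 < t) (hr : 0 ≤ r) {wt : X}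
    (hlow : ∀ w ∈ closedBall wt r, ((m + p (w - wt) - c * ‖w - wt‖ : ℝ) : EReal) ≤ f w)
    (happrox : f wt < ((m + t * r : ℝ) : EReal)) :
    ∃ w0, f w0 ≠ ⊤ ∧ ‖w0 - wt‖ < r ∧ p ∈ frechetSubdiffE f (c + t) w0 := by
  set ψ : X → ℝ := fun w => c * ‖w - wt‖ - p (w - wt)
  set F : X → EReal := fun w => f w + ((ψ w : ℝ) : EReal)
  have hψ : Continuous ψ := by fun_prop
  have hF : LowerSemicontinuous F :=
    hf.add' (continuous_coe_real_ereal.comp hψ).lowerSemicontinuous fun _ =>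
      EReal.continuousAt_add (Or.inr (EReal.coe_ne_bot _)) (Or.inr (EReal.coe_ne_top _))
  have hFm : ∀ w ∈ closedBall wt r, (m : EReal) ≤ F w := fun w hw => by
    calc (m : EReal) = ((m + p (w - wt) - c * ‖w - wt‖ : ℝ) : EReal) + ((ψ w : ℝ) : EReal) := by
          rw [← EReal.coe_add]; congr 1; ring
      _ ≤ F w := add_le_add_left (hlow w hw) _
  have hFwt : F wt = f wt := by simp [F, ψ]
  obtain ⟨z, hz, hzwt, hzmin⟩ := isClosed_closedBall.exists_ekeland_point_ereal hF hFm ht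
    (mem_closedBall_self hr) (hFwt ▸ ne_top_of_lt happrox)
  rw [hFwt] at hzwt
  have hFz_top : F z ≠ ⊤ := fun h => by
    rw [h, EReal.top_add_coe, top_le_iff] at hzwt
    exact ne_top_of_lt happrox hzwt
  have hdist : dist z wt < r := by
    have : ((m + t * dist z wt : ℝ) : EReal) < ((m + t * r : ℝ) : EReal) :=
      calc ((m + t * dist z wt : ℝ) : EReal) ≤ F z + ((t * dist z wt : ℝ) : EReal) := by
            rw [EReal.coe_add]; exact add_le_add_left (hFm z hz) _
        _ < _ := hzwt.trans_lt happrox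
    have := EReal.coe_lt_coe_iff.1 this
    nlinarith
  refine ⟨z, fun h => hFz_top (by simp [F, h]), by rwa [← dist_eq_norm], ?_⟩
  refine mem_frechetSubdiffE_of_isLocalMin_add (ψ := fun x => ψ x + t * ‖x - z‖) ?_
    (fun h => hFz_top (by simp [F, h])) (fun h => ?_) (fun x => ?_)
  · have hnhds : closedBall wt r ∈ 𝓝 z :=
      mem_of_superset (isOpen_ball.mem_nhds (mem_ball.2 hdist)) ball_subset_closedBall
    filter_upwards [hnhds] with x hx
    have := hzmin x hx
    simpa [F, EReal.coe_add, add_assoc, dist_eq_norm] using this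
  · have := hFm z hz
    simp [F, h] at this
  · have hsplit : p (x - wt) = p (x - z) + p (z - wt) := by rw [← map_add, sub_add_sub_cancel]
    have := norm_sub_le_norm_sub_add_norm_sub x z wt
    simp only [ψ, hsplit, sub_self, norm_zero]
    nlinarith

theorem exists_le_of_mem_frechetSubdiff_infConv {φ g : X → ℝ}
    (hg : ∀ x, (g x : EReal) = infConv f φ x) {ε η : ℝ} {x0 : X}
    (hp : p ∈ frechetSubdiff g ε x0) (hη : 0 < η) :
    ∃ δ > 0, ∀ wt w : X, ‖w - wt‖ < δ →
      ((g x0 - φ (wt - x0) + p (w - wt) - (ε + η) * ‖w - wt‖ : ℝ) : EReal) ≤ f w := by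
  obtain ⟨δ, hδ, hball⟩ := Metric.eventually_nhds_iff.1 (hp η hη)
  refine ⟨δ, hδ, fun wt w hw => ?_⟩
  -- at `x := x0 + (w - wt)` one has `φ (w - x) = φ (wt - x0)`
  set x := x0 + (w - wt)
  have hx : x - x0 = w - wt := add_sub_cancel_left _ _
  have hsub := hball (by rwa [dist_eq_norm, hx] : dist x x0 < δ)
  have hgx : (g x : EReal) ≤ f w + ((φ (wt - x0) : ℝ) : EReal) := by
    rw [hg, show wt - x0 = w - x by simp only [x]; abel]
    exact iInf_le _ w
  rw [hx] at hsub
  calc ((g x0 - φ (wt - x0) + p (w - wt) - (ε + η) * ‖w - wt‖ : ℝ) : EReal)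
      ≤ ((g x - φ (wt - x0) : ℝ) : EReal) := EReal.coe_le_coe_iff.2 (by linarith)
    _ ≤ f w := by rw [EReal.coe_sub]; exact EReal.sub_le_of_le_add hgx

omit [NormedSpace ℝ X] in
theorem exists_lt_of_eq_infConv {φ g : X → ℝ} {x0 : X} (hg : (g x0 : EReal) = infConv f φ x0)
    {β : ℝ} (hβ : 0 < β) : ∃ wt, f wt < ((g x0 - φ (wt - x0) + β : ℝ) : EReal) := by
  obtain ⟨wt, hwt⟩ := iInf_lt_iff.1 (hg.symm.trans_lt (EReal.coe_lt_coe_iff.2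
    (lt_add_of_pos_right (g x0) hβ)))
  refine ⟨wt, ?_⟩
  rw [show g x0 - φ (wt - x0) + β = g x0 + β - φ (wt - x0) by ring, EReal.coe_sub,
    EReal.lt_sub_iff_add_lt (Or.inl (EReal.coe_ne_bot _)) (Or.inl (EReal.coe_ne_top _))]
  exact hwt

end Subdifferential

theorem stmt_11_general [CompleteSpace X] (f : X → EReal) (φ : X → ℝ) (g : X → ℝ)
    (hflsc : LowerSemicontinuous f)
    (hg : ∀ x, (g x : EReal) = infConv f φ x)
    (ε η : ℝ) (hε : 0 < ε) (hη : 0 < η) (x0 : X)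
    (p : X →L[ℝ] ℝ) (hp : p ∈ frechetSubdiff g ε x0) :
    ∃ wt w0 : X, f wt ≠ ⊤ ∧ f w0 ≠ ⊤ ∧ ‖w0 - wt‖ ≤ η ∧
      p ∈ frechetSubdiffE f (ε + η) w0 ∧
      ((∀ x y : X, φ (x + y) ≤ φ x + φ y) →
        f wt + ((φ (w0 - x0) : ℝ) : EReal) ≤
          (g x0 : EReal) + ((φ (w0 - wt) : ℝ) : EReal) + ((η : ℝ) : EReal)) := by
  obtain ⟨δ, hδ, hlow⟩ := exists_le_of_mem_frechetSubdiff_infConv hg hp (half_pos hη)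
  obtain ⟨r, hr, hrη, hr1, hrδ⟩ : ∃ r > 0, r ≤ η ∧ r ≤ 1 ∧ r < δ :=
    ⟨min (min η 1) (δ / 2), by positivity, by simp, by simp, by simp [hδ]⟩
  obtain ⟨wt, hwt⟩ := exists_lt_of_eq_infConv (hg x0) (by positivity : 0 < η / 2 * r)
  obtain ⟨w0, hw0, hdist, hsub⟩ := exists_mem_frechetSubdiffE_of_lt_add hflsc
    (by positivity : 0 ≤ ε + η / 2) (half_pos hη) hr.le
    (fun w hw => hlow wt w ((mem_closedBall_iff_norm.1 hw).trans_lt hrδ)) hwt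
  refine ⟨wt, w0, ne_top_of_lt hwt, hw0, hdist.le.trans hrη,
    by rwa [add_assoc, add_halves] at hsub, fun hφ => ?_⟩
  have htr : η / 2 * r ≤ η := by nlinarith
  calc f wt + ((φ (w0 - x0) : ℝ) : EReal)
      ≤ ((g x0 - φ (wt - x0) + η / 2 * r : ℝ) : EReal) +
          ((φ (w0 - wt) + φ (wt - x0) : ℝ) : EReal) :=
        add_le_add hwt.le (EReal.coe_le_coe_iff.2 (by simpa using hφ (w0 - wt) (wt - x0)))
    _ ≤ (g x0 : EReal) + ((φ (w0 - wt) : ℝ) : EReal) + ((η : ℝ) : EReal) := by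
        norm_cast
        linarith

/-- approximate projections carry approximate subgradients of `f`. -/
theorem stmt_11 [CompleteSpace X] (f : X → EReal) (φ : X → ℝ) (g : X → ℝ)
    (hfbot : ∀ x, f x ≠ ⊥) (hφpos : ∀ x, 0 ≤ φ x)
    (hflsc : LowerSemicontinuous f)
    (hg : ∀ x, (g x : EReal) = infConv f φ x)
    (ε η : ℝ) (hε : 0 < ε) (hη : 0 < η) (x0 : X)
    (p : X →L[ℝ] ℝ) (hp : p ∈ frechetSubdiff g ε x0) :
    ∃ wt w0 : X, f wt ≠ ⊤ ∧ f w0 ≠ ⊤ ∧ ‖w0 - wt‖ ≤ η ∧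
      p ∈ frechetSubdiffE f (ε + η) w0 ∧
      ((∀ x y : X, φ (x + y) ≤ φ x + φ y) →
        f wt + ((φ (w0 - x0) : ℝ) : EReal) ≤
          (g x0 : EReal) + ((φ (w0 - wt) : ℝ) : EReal) + ((η : ℝ) : EReal)) :=
  stmt_11_general f φ g hflsc hg ε η hε hη x0 p hp
end
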